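/- arXiv:2601.03145 — 3 statements merged into one kernel-verified Lean document; each statement's English description precedes it below -/
import Mathlib

section
/- Let d ≥ 1 and let P ⊆ ℝ^d be a full-dimensional lattice polytope. Then μ^F(P) ≤ cd(P), where cd(P) is the codegree of P. -/
open Set

noncomputable section

/-- The pairing `⟨a, x⟩ = ∑ i, a i * x i` of an integer linear functional with a point. -/
def pair {d : ℕ} (a : Fin d → ℤ) (x : Fin d → ℝ) : ℝ := ∑ i, (a i : ℝ) * x i

/-- The support function `h_P(a) = min_{x ∈ P} ⟨a, x⟩`. -/
def suppFn {d : ℕ} (P : Set (Fin d → ℝ)) (a : Fin d → ℤ) : ℝ := sInf (pair a '' P)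

/-- The Fine adjoint polytope `P^{F(s)}`. -/
def fineAdjoint {d : ℕ} (P : Set (Fin d → ℝ)) (s : ℝ) : Set (Fin d → ℝ) :=
  {x | ∀ a : Fin d → ℤ, a ≠ 0 → suppFn P a + s ≤ pair a x}

/-- The Fine number `n^F(P) = sup {s > 0 : P^{F(s)} ≠ ∅}`. -/
def fineNumber {d : ℕ} (P : Set (Fin d → ℝ)) : ℝ :=
  sSup {s : ℝ | 0 < s ∧ (fineAdjoint P s).Nonempty}

/-- The Fine ℚ-codegree `μ^F(P) = (n^F(P))⁻¹`. -/
def fineCodeg {d : ℕ} (P : Set (Fin d → ℝ)) : ℝ := (fineNumber P)⁻¹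

/-- The Fine core `core^F(P) = P^{F(n^F(P))}`. -/
def fineCore {d : ℕ} (P : Set (Fin d → ℝ)) : Set (Fin d → ℝ) := fineAdjoint P (fineNumber P)

/-- A rational polytope: the convex hull of finitely many rational points. -/
def IsRationalPolytope {d : ℕ} (P : Set (Fin d → ℝ)) : Prop :=
  ∃ V : Finset (Fin d → ℝ), V.Nonempty ∧ (∀ v ∈ V, ∀ i, ∃ q : ℚ, v i = (q : ℝ)) ∧
    P = convexHull ℝ (V : Set (Fin d → ℝ))

/-- A lattice polytope: the convex hull of finitely many integer points. -/
def IsLatticePolytope {d : ℕ} (P : Set (Fin d → ℝ)) : Prop :=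
  ∃ V : Finset (Fin d → ℝ), V.Nonempty ∧ (∀ v ∈ V, ∀ i, ∃ n : ℤ, v i = (n : ℝ)) ∧
    P = convexHull ℝ (V : Set (Fin d → ℝ))

/-- Full-dimensional: the affine hull is all of `ℝ^d`. -/
def IsFullDim {d : ℕ} (P : Set (Fin d → ℝ)) : Prop := affineSpan ℝ P = ⊤

/-- A nonzero integer functional `a` is a Fine core normal of `P` if
`⟨a, y⟩ = h_P(a) + n^F(P)` for every `y` in the Fine core of `P`. -/
def IsFineCoreNormal {d : ℕ} (P : Set (Fin d → ℝ)) (a : Fin d → ℤ) : Prop :=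
  a ≠ 0 ∧ ∀ y ∈ fineCore P, pair a y = suppFn P a + fineNumber P

/-- The set of integer points of `ℝ^k`. -/
def intPts (k : ℕ) : Set (Fin k → ℝ) := {x | ∀ i, ∃ n : ℤ, x i = (n : ℝ)}

/-- The Fine spectrum in dimension `k`. -/
def fineSpec (k : ℕ) : Set ℝ :=
  {r | ∃ P : Set (Fin k → ℝ), IsLatticePolytope P ∧ IsFullDim P ∧ r = fineCodeg P}

/-- Unimodular equivalence of subsets of `ℝ^k`. -/
def UnimodEquiv {k : ℕ} (P Q : Set (Fin k → ℝ)) : Prop :=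
  ∃ U : Matrix (Fin k) (Fin k) ℤ, IsUnit U.det ∧ ∃ v : Fin k → ℤ,
    P = (fun x => fun i => (∑ j, (U i j : ℝ) * x j) + (v i : ℝ)) '' Q

/-- The standard simplex `Δ_k = conv{0, e_1, ..., e_k}`. -/
def stdSimp (k : ℕ) : Set (Fin k → ℝ) :=
  convexHull ℝ (insert (0 : Fin k → ℝ) (Set.range fun i => Pi.single i (1 : ℝ)))

/-- The lattice pyramid `Pyr(Q) = conv((Q × {1}) ∪ {0})`. -/
def pyrSet {k : ℕ} (Q : Set (Fin k → ℝ)) : Set (Fin (k + 1) → ℝ) :=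
  convexHull ℝ (((fun x => Fin.snoc x (1 : ℝ)) '' Q) ∪ {0})

/-- Twice the standard triangle, `2Δ₂ = conv{(0,0),(2,0),(0,2)}`. -/
def twoDelta2 : Set (Fin 2 → ℝ) :=
  convexHull ℝ ({![0, 0], ![2, 0], ![0, 2]} : Set (Fin 2 → ℝ))

/-- The `m`-fold iterated lattice pyramid over `2Δ₂`. -/
def iterPyr : (m : ℕ) → Set (Fin (2 + m) → ℝ)
  | 0 => twoDelta2
  | m + 1 => pyrSet (iterPyr m)

end

/-! A lattice point `x` in the interior of `kP` lies strictly inside every lattice half-space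
`⟨a, ·⟩ ≥ k h_P(a)` containing `kP`; since both sides are integers, `⟨a, x⟩ ≥ k h_P(a) + 1`,
i.e. `x / k ∈ P^{F(1/k)}`. Hence `1 / cd(P) ≤ n^F(P)`. -/

variable {d : ℕ}

def pairCLM (a : Fin d → ℤ) : StrongDual ℝ (Fin d → ℝ) :=
  ∑ i, (a i : ℝ) • ContinuousLinearMap.proj i

@[simp]
lemma pairCLM_apply (a : Fin d → ℤ) (x : Fin d → ℝ) : pairCLM a x = pair a x := by
  simp [pairCLM, pair]

lemma pair_smul (a : Fin d → ℤ) (c : ℝ) (x : Fin d → ℝ) : pair a (c • x) = c * pair a x := by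
  rw [← pairCLM_apply, map_smul, pairCLM_apply, smul_eq_mul]

lemma pairCLM_ne_zero {a : Fin d → ℤ} (ha : a ≠ 0) : pairCLM a ≠ 0 := by
  obtain ⟨i, hi⟩ := Function.ne_iff.mp ha
  intro h
  exact hi (by simpa [pair, Pi.single_apply] using congrArg (· (Pi.single i 1)) h)

lemma pair_mem_intPts (a : Fin d → ℤ) {x : Fin d → ℝ} (hx : x ∈ intPts d) :
    ∃ z : ℤ, pair a x = z := by
  choose n hn using hx
  exact ⟨∑ i, a i * n i, by simp [pair, hn]⟩

lemma lt_pair_of_mem_interior {a : Fin d → ℤ} (ha : a ≠ 0) {S : Set (Fin d → ℝ)} {c : ℝ}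
    (hS : ∀ y ∈ S, c ≤ pair a y) {x : Fin d → ℝ} (hx : x ∈ interior S) : c < pair a x := by
  have hopen := (pairCLM a).isOpenMap_of_ne_zero (pairCLM_ne_zero ha)
  have hsub : pairCLM a '' S ⊆ Ici c := by
    rintro _ ⟨y, hy, rfl⟩
    simpa using hS y hy
  simpa using interior_mono hsub (hopen.image_interior_subset S ⟨x, hx, rfl⟩)

lemma IsLatticePolytope.exists_suppFn_eq_int {P : Set (Fin d → ℝ)} (hP : IsLatticePolytope P)
    (a : Fin d → ℤ) : ∃ z : ℤ, suppFn P a = z ∧ ∀ y ∈ P, (z : ℝ) ≤ pair a y := by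
  obtain ⟨V, hVne, hVint, rfl⟩ := hP
  obtain ⟨v, hv, hmin⟩ := V.exists_min_image (pair a) hVne
  obtain ⟨z, hz⟩ := pair_mem_intPts a (hVint v hv)
  have hlb : ∀ y ∈ convexHull ℝ (V : Set (Fin d → ℝ)), (z : ℝ) ≤ pair a y := fun y hy => by
    obtain ⟨w, hw, hwy⟩ :=
      ((pairCLM a).toLinearMap.concaveOn convex_univ).exists_le_of_mem_convexHull (subset_univ _) hy
    simp only [ContinuousLinearMap.coe_coe, pairCLM_apply] at hwy
    simpa [← hz] using (hmin w hw).trans hwy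
  have hleast : IsLeast (pair a '' convexHull ℝ (V : Set (Fin d → ℝ))) z :=
    ⟨⟨v, subset_convexHull ℝ _ hv, hz⟩, by rintro _ ⟨y, hy, rfl⟩; exact hlb y hy⟩
  exact ⟨z, hleast.csInf_eq, hlb⟩

lemma IsLatticePolytope.convex {P : Set (Fin d → ℝ)} (hP : IsLatticePolytope P) :
    Convex ℝ P := by
  obtain ⟨V, -, -, rfl⟩ := hP
  exact convex_convexHull ℝ _

lemma inv_smul_mem_fineAdjoint {P : Set (Fin d → ℝ)} (hP : IsLatticePolytope P) {k : ℕ}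
    (hk : 0 < k) {x : Fin d → ℝ} (hx : x ∈ interior ((fun y => (k : ℝ) • y) '' P))
    (hxZ : x ∈ intPts d) : (k : ℝ)⁻¹ • x ∈ fineAdjoint P (k : ℝ)⁻¹ := by
  intro a ha
  obtain ⟨z, hz, hzP⟩ := hP.exists_suppFn_eq_int a
  obtain ⟨w, hw⟩ := pair_mem_intPts a hxZ
  have hlt : (k : ℝ) * z < w := by
    refine hw ▸ lt_pair_of_mem_interior ha ?_ hx
    rintro _ ⟨y, hy, rfl⟩
    rw [pair_smul]
    exact mul_le_mul_of_nonneg_left (hzP y hy) k.cast_nonneg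
  have hle : (k : ℝ) * z + 1 ≤ w := by exact_mod_cast (by exact_mod_cast hlt : (k : ℤ) * z < w)
  have hk₀ : (0 : ℝ) < k := by exact_mod_cast hk
  rw [hz, pair_smul, hw]
  calc (z : ℝ) + (k : ℝ)⁻¹ = (k : ℝ)⁻¹ * (k * z + 1) := by field_simp
    _ ≤ (k : ℝ)⁻¹ * w := by gcongr

lemma exists_intPts_mem_interior_smul {P : Set (Fin d → ℝ)} (hP : (interior P).Nonempty) :
    ∃ k : ℕ, 1 ≤ k ∧ (interior ((fun y => (k : ℝ) • y) '' P) ∩ intPts d).Nonempty := by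
  obtain ⟨x, hx⟩ := hP
  obtain ⟨ε, hε, hball⟩ := Metric.isOpen_iff.mp isOpen_interior x hx
  obtain ⟨n, hn⟩ := exists_nat_one_div_lt hε
  obtain ⟨k, hk1, hkε⟩ : ∃ k : ℕ, 1 ≤ k ∧ 1 / (k : ℝ) < ε :=
    ⟨n + 1, by omega, by exact_mod_cast hn⟩
  have hk : (0 : ℝ) < k := by exact_mod_cast hk1
  refine ⟨k, hk1, fun i => (round (k * x i) : ℝ), ?_, fun i => ⟨_, rfl⟩⟩
  rw [image_smul, interior_smul₀ hk.ne', mem_smul_set_iff_inv_smul_mem₀ hk.ne']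
  refine hball ((dist_pi_lt_iff hε).mpr fun i => ?_)
  have hround : |(round (k * x i) : ℝ) - k * x i| ≤ 1 / 2 := by
    rw [abs_sub_comm]; exact abs_sub_round _
  calc dist ((k : ℝ)⁻¹ * round (k * x i)) (x i)
        = |(k : ℝ)⁻¹ * ((round (k * x i) : ℝ) - k * x i)| := by
        rw [mul_sub, inv_mul_cancel_left₀ hk.ne', Real.dist_eq]
    _ = (k : ℝ)⁻¹ * |(round (k * x i) : ℝ) - k * x i| := by
        rw [abs_mul, abs_of_pos (inv_pos.mpr hk)]
    _ ≤ (k : ℝ)⁻¹ * (1 / 2) := by gcongr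
    _ < ε := by rw [one_div] at hkε; linarith [inv_pos.mpr hk]

noncomputable def codegree (P : Set (Fin d → ℝ)) : ℕ :=
  sInf {k : ℕ | 1 ≤ k ∧ (interior ((fun y => (k : ℝ) • y) '' P) ∩ intPts d).Nonempty}

lemma codegree_spec {P : Set (Fin d → ℝ)} (hP : (interior P).Nonempty) :
    1 ≤ codegree P ∧
      (interior ((fun y => (codegree P : ℝ) • y) '' P) ∩ intPts d).Nonempty :=
  Nat.sInf_mem (exists_intPts_mem_interior_smul hP)

lemma fineCodeg_le_inv {P : Set (Fin d → ℝ)} {s : ℝ} (hs : 0 < s)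
    (hP : (fineAdjoint P s).Nonempty) : fineCodeg P ≤ s⁻¹ := by
  unfold fineCodeg fineNumber
  by_cases hbdd : BddAbove {s : ℝ | 0 < s ∧ (fineAdjoint P s).Nonempty}
  · exact inv_anti₀ hs (le_csSup hbdd ⟨hs, hP⟩)
  · -- `sSup` of a set of reals that is not bounded above is `0`
    rw [Real.sSup_of_not_bddAbove hbdd, inv_zero]
    exact (inv_pos.mpr hs).le

theorem stmt_2_general {d : ℕ} (P : Set (Fin d → ℝ))
    (hP : IsLatticePolytope P) (hfull : IsFullDim P) :
    fineCodeg P ≤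
      ((sInf {k : ℕ | 1 ≤ k ∧
        (interior ((fun y => (k : ℝ) • y) '' P) ∩ intPts d).Nonempty} : ℕ) : ℝ) := by
  change fineCodeg P ≤ codegree P
  obtain ⟨hk, x, hx, hxZ⟩ :=
    codegree_spec (hP.convex.interior_nonempty_iff_affineSpan_eq_top.mpr hfull)
  have hk₀ : (0 : ℝ) < codegree P := by exact_mod_cast hk
  simpa using fineCodeg_le_inv (inv_pos.mpr hk₀) ⟨_, inv_smul_mem_fineAdjoint hP hk hx hxZ⟩

/-- the Fine ℚ-codegree is at most the codegree. -/
theorem stmt_2 {d : ℕ} (hd : 1 ≤ d) (P : Set (Fin d → ℝ))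
    (hP : IsLatticePolytope P) (hfull : IsFullDim P) :
    fineCodeg P ≤
      ((sInf {k : ℕ | 1 ≤ k ∧
        (interior ((fun y => (k : ℝ) • y) '' P) ∩ intPts d).Nonempty} : ℕ) : ℝ) :=
  stmt_2_general P hP hfull
end

section
/- Let d ≥ d' ≥ 1, let π : ℝ^d → ℝ^{d'} be a surjective linear map with π(ℤ^d) = ℤ^{d'}, and let P ⊆ ℝ^d be a full-dimensional rational polytope. Then μ^F(π(P)) ≤ μ^F(P), where μ^F(π(P)) is computed in ℝ^{d'} with respect to the lattice ℤ^{d'}. -/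
open Set

/-!
A nonzero integer functional `a'` on `ℝ^{d'}` pulls back along `π` to the functional
`a' ∘ π`, which is integral because `π` maps the standard basis to lattice points, and nonzero
because `π` is surjective. Hence `h_{π(P)}(a') = h_P(a' ∘ π)`, and `π` maps `P^{F(s)}` into
`π(P)^{F(s)}`: every `s` feasible for `P` is feasible for `π(P)`, so `n^F(P) ≤ n^F(π(P))`.
Inverting needs `n^F(P) > 0`, which holds because `P` contains a sup-norm ball `B(x, r)`,
and then `x ∈ P^{F(r)}`; and `n^F(π(P)) < ∞` since `d' ≥ 1`.
-/

section

variable {d d' : ℕ}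

def fineFeasible (P : Set (Fin d → ℝ)) : Set ℝ := {s | 0 < s ∧ (fineAdjoint P s).Nonempty}

lemma fineNumber_eq_sSup_fineFeasible (P : Set (Fin d → ℝ)) :
    fineNumber P = sSup (fineFeasible P) := rfl

lemma pair_eq_dotProduct (a : Fin d → ℤ) (x : Fin d → ℝ) :
    pair a x = (fun i => (a i : ℝ)) ⬝ᵥ x := rfl

lemma pair_neg (a : Fin d → ℤ) (x : Fin d → ℝ) : pair (-a) x = -pair a x := by
  simp [pair, Finset.sum_neg_distrib]

lemma pair_single_one (a : Fin d → ℤ) (i : Fin d) : pair a (Pi.single i 1) = a i := by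
  rw [pair_eq_dotProduct, dotProduct_single_one]

lemma continuous_pair (a : Fin d → ℤ) : Continuous (pair a) := by
  unfold pair
  fun_prop

lemma eq_zero_of_forall_pair_eq_zero {a : Fin d → ℤ} (h : ∀ x, pair a x = 0) : a = 0 := by
  funext i
  exact_mod_cast (pair_single_one a i).symm.trans (h _)

lemma exists_intCast_eq_pair (a : Fin d → ℤ) {x : Fin d → ℝ} (hx : x ∈ intPts d) :
    ∃ n : ℤ, pair a x = n := by
  choose m hm using hx
  exact ⟨∑ i, a i * m i, by simp [pair, hm]⟩

lemma pair_intSign (a : Fin d → ℤ) :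
    pair a (fun i => ((a i).sign : ℝ)) = ((∑ i, |a i| : ℤ) : ℝ) := by
  push_cast [pair]
  refine Finset.sum_congr rfl fun i _ => ?_
  exact_mod_cast (Int.mul_sign_self (a i)).trans (Int.natCast_natAbs (a i))

lemma one_le_sum_abs {a : Fin d → ℤ} (ha : a ≠ 0) : 1 ≤ ∑ i, |a i| := by
  obtain ⟨i, hi⟩ := Function.ne_iff.1 ha
  exact (Int.one_le_abs hi).trans
    (Finset.single_le_sum (fun j _ => abs_nonneg (a j)) (Finset.mem_univ i))

lemma single_one_mem_intPts (i : Fin d) : (Pi.single i 1 : Fin d → ℝ) ∈ intPts d := by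
  intro j
  refine ⟨if j = i then 1 else 0, ?_⟩
  rw [Pi.single_apply]
  split_ifs <;> simp

lemma suppFn_le_pair {P : Set (Fin d → ℝ)} {a : Fin d → ℤ} (hbdd : BddBelow (pair a '' P))
    {x : Fin d → ℝ} (hx : x ∈ P) : suppFn P a ≤ pair a x :=
  csInf_le hbdd (mem_image_of_mem _ hx)

lemma suppFn_image {P : Set (Fin d → ℝ)} {f : (Fin d → ℝ) → (Fin d' → ℝ)} {a : Fin d → ℤ}
    {a' : Fin d' → ℤ} (h : ∀ x, pair a x = pair a' (f x)) : suppFn (f '' P) a' = suppFn P a := by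
  unfold suppFn
  rw [image_image]
  exact congrArg sInf (image_congr fun x _ => (h x).symm)

section projection

variable {π : (Fin d → ℝ) →ₗ[ℝ] (Fin d' → ℝ)}

lemma exists_pair_eq_pair_comp (hπ : MapsTo π (intPts d) (intPts d')) (a' : Fin d' → ℤ) :
    ∃ a : Fin d → ℤ, ∀ x, pair a x = pair a' (π x) := by
  choose a ha using fun i => exists_intCast_eq_pair a' (hπ (single_one_mem_intPts i))
  refine ⟨a, fun x => ?_⟩
  have hx : π x = ∑ i, x i • π (Pi.single i 1) := by
    conv_lhs => rw [← Finset.univ_sum_single x]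
    simp only [map_sum, ← map_smul, ← Pi.single_smul, smul_eq_mul, mul_one]
  calc pair a x = ∑ i, x i * pair a' (π (Pi.single i 1)) :=
        Finset.sum_congr rfl fun i _ => by rw [ha, mul_comm]
    _ = pair a' (π x) := by
      rw [hx, pair_eq_dotProduct, dotProduct_sum]
      simp only [dotProduct_smul, smul_eq_mul, pair_eq_dotProduct]

lemma mapsTo_fineAdjoint (hπ : MapsTo π (intPts d) (intPts d')) (hsurj : Function.Surjective π)
    (P : Set (Fin d → ℝ)) (s : ℝ) : MapsTo π (fineAdjoint P s) (fineAdjoint (π '' P) s) := by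
  intro x hx a' ha'
  obtain ⟨a, ha⟩ := exists_pair_eq_pair_comp hπ a'
  have ha0 : a ≠ 0 := by
    rintro rfl
    refine ha' (eq_zero_of_forall_pair_eq_zero fun y => ?_)
    obtain ⟨x, rfl⟩ := hsurj y
    rw [← ha]
    simp [pair]
  rw [suppFn_image ha, ← ha]
  exact hx a ha0

lemma fineFeasible_subset_image (hπ : MapsTo π (intPts d) (intPts d'))
    (hsurj : Function.Surjective π) (P : Set (Fin d → ℝ)) :
    fineFeasible P ⊆ fineFeasible (π '' P) :=
  fun _ ⟨hs, hne⟩ => ⟨hs, hne.image _ |>.mono (mapsTo_fineAdjoint hπ hsurj P _).image_subset⟩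

end projection

/-- Testing against `±e₀` gives `2s ≤ -(h_P(e₀) + h_P(-e₀))`. -/
lemma bddAbove_fineFeasible (hd : 1 ≤ d) (P : Set (Fin d → ℝ)) : BddAbove (fineFeasible P) := by
  set e : Fin d → ℤ := Pi.single ⟨0, hd⟩ 1
  have he : e ≠ 0 := by simp [e]
  refine ⟨-(suppFn P e + suppFn P (-e)) / 2, ?_⟩
  rintro s ⟨-, y, hy⟩
  have h₁ := hy e he
  have h₂ := hy (-e) (neg_ne_zero.2 he)
  rw [pair_neg] at h₂
  linarith

/-- Moving from `x` by `-r · sign(a)` stays in the ball and lowers `⟨a, ·⟩` by `r ∑ |aᵢ| ≥ r`. -/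
lemma mem_fineAdjoint_of_closedBall_subset {P : Set (Fin d → ℝ)}
    (hbdd : ∀ a : Fin d → ℤ, BddBelow (pair a '' P)) {x : Fin d → ℝ} {r : ℝ} (hr : 0 ≤ r)
    (hball : Metric.closedBall x r ⊆ P) : x ∈ fineAdjoint P r := by
  intro a ha
  set v : Fin d → ℝ := fun i => ((a i).sign : ℝ)
  have hv : ‖v‖ ≤ 1 := by
    refine (pi_norm_le_iff_of_nonneg zero_le_one).2 fun i => ?_
    rcases (a i).sign_trichotomy with h | h | h <;> simp [v, h]
  have hmem : x - r • v ∈ P := by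
    refine hball ?_
    rw [Metric.mem_closedBall, dist_eq_norm, sub_sub_cancel_left, norm_neg, norm_smul,
      Real.norm_of_nonneg hr]
    exact mul_le_of_le_one_right hr hv
  have hlow : r ≤ r * pair a v := by
    rw [pair_intSign]
    exact le_mul_of_one_le_right hr (by exact_mod_cast one_le_sum_abs ha)
  have hpair : pair a (x - r • v) = pair a x - r * pair a v := by
    simp only [pair_eq_dotProduct, dotProduct_sub, dotProduct_smul, smul_eq_mul]
  linarith [suppFn_le_pair (hbdd a) hmem]

lemma fineFeasible_nonempty {P : Set (Fin d → ℝ)} (hP : IsCompact P)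
    (hint : (interior P).Nonempty) : (fineFeasible P).Nonempty := by
  obtain ⟨x, hx⟩ := hint
  obtain ⟨ε, hε, hball⟩ := Metric.isOpen_iff.1 isOpen_interior x hx
  have hsub : Metric.closedBall x (ε / 2) ⊆ P :=
    (Metric.closedBall_subset_ball (half_lt_self hε)).trans (hball.trans interior_subset)
  have hbdd a := hP.bddBelow_image (continuous_pair a).continuousOn
  exact ⟨ε / 2, half_pos hε, x, mem_fineAdjoint_of_closedBall_subset hbdd (half_pos hε).le hsub⟩

lemma IsRationalPolytope.isCompact {P : Set (Fin d → ℝ)} (hP : IsRationalPolytope P) :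
    IsCompact P := by
  obtain ⟨V, -, -, rfl⟩ := hP
  exact V.finite_toSet.isCompact_convexHull (𝕜 := ℝ)

lemma IsRationalPolytope.interior_nonempty {P : Set (Fin d → ℝ)} (hP : IsRationalPolytope P)
    (hfull : IsFullDim P) : (interior P).Nonempty := by
  obtain ⟨V, -, -, rfl⟩ := hP
  exact (convex_convexHull ℝ _).interior_nonempty_iff_affineSpan_eq_top.2 hfull

end

theorem stmt_3_general {d d' : ℕ} (hd' : 1 ≤ d')
    (π : (Fin d → ℝ) →ₗ[ℝ] (Fin d' → ℝ)) (hsurj : Function.Surjective π)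
    (hlat : π '' intPts d = intPts d')
    (P : Set (Fin d → ℝ)) (hP : IsRationalPolytope P) (hfull : IsFullDim P) :
    fineCodeg (π '' P) ≤ fineCodeg P := by
  have hsub := fineFeasible_subset_image (mapsTo_iff_image_subset.2 hlat.le) hsurj P
  have hbdd := bddAbove_fineFeasible hd' (π '' P)
  obtain ⟨s, hs⟩ := fineFeasible_nonempty hP.isCompact (hP.interior_nonempty hfull)
  have hpos : 0 < sSup (fineFeasible P) := hs.1.trans_le (le_csSup (hbdd.mono hsub) hs)
  rw [fineCodeg, fineCodeg, fineNumber_eq_sSup_fineFeasible, fineNumber_eq_sSup_fineFeasible]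
  exact inv_anti₀ hpos (csSup_le_csSup hbdd ⟨s, hs⟩ hsub)

/-- the Fine ℚ-codegree does not increase under lattice-preserving
surjective linear projections. -/
theorem stmt_3 {d d' : ℕ} (hd' : 1 ≤ d') (hdd : d' ≤ d)
    (π : (Fin d → ℝ) →ₗ[ℝ] (Fin d' → ℝ)) (hsurj : Function.Surjective π)
    (hlat : π '' intPts d = intPts d')
    (P : Set (Fin d → ℝ)) (hP : IsRationalPolytope P) (hfull : IsFullDim P) :
    fineCodeg (π '' P) ≤ fineCodeg P :=
  stmt_3_general hd' π hsurj hlat P hP hfull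
end

section
/- Let P ⊆ ℝ^d be a full-dimensional lattice polytope and let Pyr(P) = conv((P × {1}) ∪ {0}) ⊆ ℝ^{d+1} be the lattice pyramid over P. Then μ^F(Pyr(P)) = max{2, μ^F(P) + 1}. -/
open Set

/-
Write a point of `ℝ^{d+1}` as `(y', c)`. The support function of the pyramid is
`h_{Pyr P}(a, b) = min (h_P(a) + b) 0`. For `y ∈ Pyr(P)^{F(s)}` the functionals `(0, ±1)` force
`c ∈ [s, 1 - s]`, and the functionals `(a, -h_P(a))`, integral because `P` is a lattice polytope,
put `c⁻¹ y'` into `P^{F(s/c)}`. Conversely `((1 - s) z, 1 - s) ∈ Pyr(P)^{F(s)}` whenever `s ≤ 1/2`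
and `z ∈ P^{F(s/(1-s))}`. Hence `Pyr(P)^{F(s)} ≠ ∅` iff `s ≤ 1/2` and `P^{F(s/(1-s))} ≠ ∅`, so
`n^F(Pyr P) = min (1/2) (t/(t+1))` with `t = n^F(P) > 0`, whose inverse is `max 2 (t⁻¹ + 1)`.
-/

section Pairing

variable {d : ℕ}

lemma isLinearMap_pair (a : Fin d → ℤ) : IsLinearMap ℝ (pair a) where
  map_add x y := by simp [pair, mul_add, Finset.sum_add_distrib]
  map_smul c x := by simp [pair, Finset.mul_sum, mul_left_comm]

lemma pair_sub (a : Fin d → ℤ) (x y : Fin d → ℝ) : pair a (x - y) = pair a x - pair a y := by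
  simp [pair, mul_sub]

@[simp] lemma zero_pair (x : Fin d → ℝ) : pair 0 x = 0 := by simp [pair]

@[simp] lemma pair_zero (a : Fin d → ℤ) : pair a 0 = 0 := by simp [pair]

lemma pair_single (a : Fin d → ℤ) (i : Fin d) (c : ℝ) : pair a (Pi.single i c) = a i * c := by
  simp [pair, Pi.single_apply]

@[simp] lemma pair_snoc (a : Fin (d + 1) → ℤ) (x : Fin d → ℝ) (c : ℝ) :
    pair a (Fin.snoc x c) = pair (Fin.init a) x + a (Fin.last d) * c := by
  simp [pair, Fin.sum_univ_castSucc, Fin.init]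

lemma pair_eq_pair_init_add (a : Fin (d + 1) → ℤ) (y : Fin (d + 1) → ℝ) :
    pair a y = pair (Fin.init a) (Fin.init y) + a (Fin.last d) * y (Fin.last d) := by
  conv_lhs => rw [← Fin.snoc_init_self y]
  exact pair_snoc a _ _

lemma exists_pair_eq_intCast {x : Fin d → ℝ} (hx : x ∈ intPts d) (a : Fin d → ℤ) :
    ∃ m : ℤ, pair a x = m := by
  choose n hn using hx
  exact ⟨∑ i, a i * n i, by simp [pair, hn]⟩

end Pairing

section SupportFunction

variable {d : ℕ}

lemma exists_isLeast_pair_image_convexHull {V : Finset (Fin d → ℝ)} (hV : V.Nonempty)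
    (a : Fin d → ℤ) :
    ∃ v ∈ V, IsLeast (pair a '' convexHull ℝ (V : Set (Fin d → ℝ))) (pair a v) := by
  obtain ⟨v, hv, hmin⟩ := V.exists_min_image (pair a) hV
  refine ⟨v, hv, mem_image_of_mem _ (subset_convexHull ℝ _ hv), ?_⟩
  rintro _ ⟨x, hx, rfl⟩
  exact convexHull_min hmin (convex_halfSpace_ge (isLinearMap_pair a) _) hx

namespace IsLatticePolytope

variable {P : Set (Fin d → ℝ)}

lemma exists_isLeast_pair_image (hP : IsLatticePolytope P) (a : Fin d → ℤ) :
    ∃ v ∈ intPts d, IsLeast (pair a '' P) (pair a v) := by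
  obtain ⟨V, hV, hint, rfl⟩ := hP
  obtain ⟨v, hv, hleast⟩ := exists_isLeast_pair_image_convexHull hV a
  exact ⟨v, hint v hv, hleast⟩

lemma isLeast_suppFn (hP : IsLatticePolytope P) (a : Fin d → ℤ) :
    IsLeast (pair a '' P) (suppFn P a) := by
  obtain ⟨v, -, hv⟩ := hP.exists_isLeast_pair_image a
  rwa [suppFn, hv.csInf_eq]

lemma exists_suppFn_eq_intCast (hP : IsLatticePolytope P) (a : Fin d → ℤ) :
    ∃ m : ℤ, suppFn P a = m := by
  obtain ⟨v, hv, hleast⟩ := hP.exists_isLeast_pair_image a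
  rw [suppFn, hleast.csInf_eq]
  exact exists_pair_eq_intCast hv a

lemma suppFn_zero (hP : IsLatticePolytope P) : suppFn P 0 = 0 := by
  obtain ⟨x, -, hx⟩ := (hP.isLeast_suppFn 0).1
  rw [← hx, zero_pair]

end IsLatticePolytope

lemma isLeast_pair_image_pyrSet {P : Set (Fin d → ℝ)} {a : Fin (d + 1) → ℤ} {m : ℝ}
    (h : IsLeast (pair (Fin.init a) '' P) m) :
    IsLeast (pair a '' pyrSet P) (min (m + a (Fin.last d)) 0) := by
  obtain ⟨⟨v, hv, rfl⟩, hlow⟩ := h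
  constructor
  · rcases min_choice (pair (Fin.init a) v + a (Fin.last d)) 0 with h | h <;> rw [h]
    · exact ⟨Fin.snoc v 1, subset_convexHull ℝ _ (Or.inl ⟨v, hv, rfl⟩), by simp⟩
    · exact ⟨0, subset_convexHull ℝ _ (Or.inr rfl), pair_zero a⟩
  · rintro _ ⟨y, hy, rfl⟩
    refine convexHull_min ?_ (convex_halfSpace_ge (isLinearMap_pair a) _) hy
    rintro _ (⟨x, hx, rfl⟩ | rfl)
    · have := hlow (mem_image_of_mem _ hx)
      simp only [mem_ofPred_eq, pair_snoc, mul_one]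
      exact min_le_of_left_le (by linarith)
    · simp

lemma IsLatticePolytope.suppFn_pyrSet {P : Set (Fin d → ℝ)} (hP : IsLatticePolytope P)
    (a : Fin (d + 1) → ℤ) :
    suppFn (pyrSet P) a = min (suppFn P (Fin.init a) + a (Fin.last d)) 0 :=
  (isLeast_pair_image_pyrSet (hP.isLeast_suppFn _)).csInf_eq

end SupportFunction

section FineSet

variable {d : ℕ} {P : Set (Fin d → ℝ)}

def fineSet (P : Set (Fin d → ℝ)) : Set ℝ := {s | 0 < s ∧ (fineAdjoint P s).Nonempty}

lemma fineAdjoint_anti {s s' : ℝ} (h : s ≤ s') : fineAdjoint P s' ⊆ fineAdjoint P s :=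
  fun _ hx a ha => (add_le_add_right h _).trans (hx a ha)

lemma bddAbove_fineSet (hd : 1 ≤ d) (P : Set (Fin d → ℝ)) : BddAbove (fineSet P) := by
  set e : Fin d → ℤ := Pi.single ⟨0, hd⟩ 1
  have he : e ≠ 0 := Pi.single_ne_zero_iff.mpr one_ne_zero
  refine ⟨-(suppFn P e + suppFn P (-e)) / 2, ?_⟩
  rintro _ ⟨-, x, hx⟩
  have h₁ := hx e he
  have h₂ := hx (-e) (neg_ne_zero.mpr he)
  have : pair (-e) x = -pair e x := by simp [pair]
  linarith

lemma fineSet_subset_Ioc (hd : 1 ≤ d) (P : Set (Fin d → ℝ)) :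
    fineSet P ⊆ Ioc 0 (fineNumber P) :=
  fun _ hs => ⟨hs.1, le_csSup (bddAbove_fineSet hd P) hs⟩

lemma Ioo_subset_fineSet (P : Set (Fin d → ℝ)) : Ioo 0 (fineNumber P) ⊆ fineSet P := by
  rintro s ⟨hs, hst⟩
  have hne : (fineSet P).Nonempty := by
    by_contra h
    rw [not_nonempty_iff_eq_empty] at h
    rw [fineNumber, ← fineSet, h, Real.sSup_empty] at hst
    linarith
  obtain ⟨r, ⟨-, x, hx⟩, hsr⟩ := exists_lt_of_lt_csSup hne hst
  exact ⟨hs, x, fineAdjoint_anti hsr.le hx⟩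

lemma suppFn_add_le_pair_of_closedBall_subset {a : Fin d → ℤ} (ha : a ≠ 0)
    (hbdd : BddBelow (pair a '' P)) {x : Fin d → ℝ} {ε : ℝ} (hε : 0 ≤ ε)
    (hball : Metric.closedBall x ε ⊆ P) : suppFn P a + ε ≤ pair a x := by
  obtain ⟨i, hi⟩ := Function.ne_iff.mp ha
  set σ : ℝ := Int.cast (a i).sign
  have hσ : |σ| = 1 := by simp [σ, ← Int.cast_abs, Int.abs_sign_of_ne_zero hi]
  have hσa : σ * a i = |(a i : ℝ)| := by simp [σ, ← Int.cast_mul]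
  have hai : 1 ≤ |(a i : ℝ)| := by exact_mod_cast Int.one_le_abs hi
  have hmem : x - Pi.single i (ε * σ) ∈ P := hball <| by
    simp [Pi.norm_single, hσ, abs_of_nonneg hε]
  have hle : suppFn P a ≤ pair a (x - Pi.single i (ε * σ)) :=
    csInf_le hbdd (mem_image_of_mem _ hmem)
  rw [pair_sub, pair_single] at hle
  nlinarith

lemma IsLatticePolytope.fineSet_nonempty (hP : IsLatticePolytope P) (hfull : IsFullDim P) :
    (fineSet P).Nonempty := by
  have hconv : Convex ℝ P := by
    obtain ⟨V, -, -, rfl⟩ := hP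
    exact convex_convexHull ℝ _
  obtain ⟨x, hx⟩ := hconv.interior_nonempty_iff_affineSpan_eq_top.mpr hfull
  obtain ⟨ε, hε, hball⟩ :=
    Metric.nhds_basis_closedBall.mem_iff.mp (mem_interior_iff_mem_nhds.mp hx)
  exact ⟨ε, hε, x, fun a ha =>
    suppFn_add_le_pair_of_closedBall_subset ha (hP.isLeast_suppFn a).bddBelow hε.le hball⟩

lemma IsLatticePolytope.fineNumber_pos (hd : 1 ≤ d) (hP : IsLatticePolytope P)
    (hfull : IsFullDim P) : 0 < fineNumber P := by
  obtain ⟨s, hs⟩ := hP.fineSet_nonempty hfull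
  obtain ⟨hs₀, hst⟩ := fineSet_subset_Ioc hd P hs
  exact hs₀.trans_le hst

end FineSet

namespace IsLatticePolytope

variable {d : ℕ} {P : Set (Fin d → ℝ)}

lemma snoc_smul_mem_fineAdjoint_pyrSet (hP : IsLatticePolytope P) {s : ℝ} (hs₀ : 0 ≤ s)
    (hs₁ : s ≤ 1 / 2) {z : Fin d → ℝ} (hz : z ∈ fineAdjoint P (s / (1 - s))) :
    Fin.snoc ((1 - s) • z) (1 - s) ∈ fineAdjoint (pyrSet P) s := by
  intro a ha
  rw [hP.suppFn_pyrSet, pair_snoc, pair_smul]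
  set b : ℝ := Int.cast (a (Fin.last d))
  by_cases hA : Fin.init a = 0
  · have hb : a (Fin.last d) ≠ 0 :=
      fun hb => ha <| funext fun i => Fin.lastCases hb (congrFun hA) i
    have hb : 1 ≤ |b| := by simp only [b]; exact_mod_cast Int.one_le_abs hb
    rw [hA, hP.suppFn_zero, zero_pair]
    rcases le_total 0 b with h | h
    · rw [abs_of_nonneg h] at hb
      rw [min_eq_right (by linarith)]
      nlinarith
    · rw [abs_of_nonpos h] at hb
      rw [min_eq_left (by linarith)]
      nlinarith
  · have h1s : 0 < 1 - s := by linarith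
    have hzA := mul_le_mul_of_nonneg_left (hz _ hA) h1s.le
    rw [mul_add, mul_div_cancel₀ _ h1s.ne'] at hzA
    have hmin : min (suppFn P (Fin.init a) + b) 0 ≤ (1 - s) * (suppFn P (Fin.init a) + b) := by
      rcases le_total 0 (suppFn P (Fin.init a) + b) with h | h
      · exact min_le_of_right_le (by nlinarith)
      · exact min_le_of_left_le (by nlinarith)
    nlinarith

lemma last_mem_Icc_of_mem_fineAdjoint_pyrSet (hP : IsLatticePolytope P) {s : ℝ}
    {y : Fin (d + 1) → ℝ} (hy : y ∈ fineAdjoint (pyrSet P) s) :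
    y (Fin.last d) ∈ Icc s (1 - s) := by
  have hvert : ∀ b : ℤ, b ≠ 0 → min (b : ℝ) 0 + s ≤ b * y (Fin.last d) := by
    intro b hb
    have h := hy (Fin.snoc 0 b) fun h => hb (by simpa using congrFun h (Fin.last d))
    rwa [hP.suppFn_pyrSet, pair_eq_pair_init_add, Fin.init_snoc, Fin.snoc_last, hP.suppFn_zero,
      zero_pair, zero_add, zero_add] at h
  have h₁ := hvert 1 one_ne_zero
  have h₂ := hvert (-1) (by norm_num)
  norm_num at h₁ h₂
  constructor <;> linarith

lemma smul_init_mem_fineAdjoint_of_mem_fineAdjoint_pyrSet (hP : IsLatticePolytope P) {s : ℝ}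
    {y : Fin (d + 1) → ℝ} (hc : 0 < y (Fin.last d)) (hy : y ∈ fineAdjoint (pyrSet P) s) :
    (y (Fin.last d))⁻¹ • Fin.init y ∈ fineAdjoint P (s / y (Fin.last d)) := by
  intro a ha
  obtain ⟨m, hm⟩ := hP.exists_suppFn_eq_intCast a
  have h := hy (Fin.snoc a (-m)) fun h =>
    ha <| funext fun i => by simpa using congrFun h i.castSucc
  rw [hP.suppFn_pyrSet, pair_eq_pair_init_add, Fin.init_snoc, Fin.snoc_last, hm] at h
  push_cast at h
  rw [add_neg_cancel, min_self, zero_add] at h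
  rw [pair_smul, hm, le_inv_mul_iff₀ hc, mul_add, mul_div_cancel₀ _ hc.ne']
  linarith

lemma mem_fineSet_pyrSet_iff (hP : IsLatticePolytope P) {s : ℝ} :
    s ∈ fineSet (pyrSet P) ↔ s ≤ 1 / 2 ∧ s / (1 - s) ∈ fineSet P := by
  constructor
  · rintro ⟨hs, y, hy⟩
    obtain ⟨hsc, hc1⟩ := hP.last_mem_Icc_of_mem_fineAdjoint_pyrSet hy
    have hc : 0 < y (Fin.last d) := hs.trans_le hsc
    refine ⟨by linarith, div_pos hs (by linarith), _,
      fineAdjoint_anti ?_ (hP.smul_init_mem_fineAdjoint_of_mem_fineAdjoint_pyrSet hc hy)⟩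
    exact div_le_div_of_nonneg_left hs.le hc hc1
  · rintro ⟨hs₁, hr, z, hz⟩
    have hs : 0 < s := (div_pos_iff_of_pos_right (by linarith)).mp hr
    exact ⟨hs, _, hP.snoc_smul_mem_fineAdjoint_pyrSet hs.le hs₁ hz⟩

end IsLatticePolytope

lemma csSup_eq_of_Ioo_subset_of_subset_Ioc {S : Set ℝ} {a b : ℝ} (hab : a < b)
    (h₁ : Ioo a b ⊆ S) (h₂ : S ⊆ Ioc a b) : sSup S = b :=
  le_antisymm (csSup_le ((nonempty_Ioo.mpr hab).mono h₁) fun _ hx => (h₂ hx).2)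
    (csSup_Ioo hab ▸ csSup_le_csSup ⟨b, fun _ hx => (h₂ hx).2⟩ (nonempty_Ioo.mpr hab) h₁)

lemma IsLatticePolytope.fineNumber_pyrSet {d : ℕ} (hd : 1 ≤ d) {P : Set (Fin d → ℝ)}
    (hP : IsLatticePolytope P) (hfull : IsFullDim P) :
    fineNumber (pyrSet P) = min (1 / 2) (fineNumber P / (fineNumber P + 1)) := by
  set t := fineNumber P
  have ht : 0 < t := hP.fineNumber_pos hd hfull
  refine csSup_eq_of_Ioo_subset_of_subset_Ioc (by positivity) ?_ ?_
  · rintro s ⟨hs, hsm⟩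
    obtain ⟨hs₁, hst⟩ := lt_min_iff.mp hsm
    refine hP.mem_fineSet_pyrSet_iff.mpr ⟨hs₁.le, Ioo_subset_fineSet P ⟨?_, ?_⟩⟩
    · exact div_pos hs (by linarith)
    · rw [div_lt_iff₀ (by linarith)]
      rw [lt_div_iff₀ (by linarith)] at hst
      linarith
  · intro s hs
    obtain ⟨hs₁, hr⟩ := hP.mem_fineSet_pyrSet_iff.mp hs
    have hst := (fineSet_subset_Ioc hd P hr).2
    refine ⟨hs.1, le_min hs₁ ?_⟩
    rw [div_le_iff₀ (by linarith)] at hst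
    rw [le_div_iff₀ (by linarith)]
    linarith

lemma inv_min_half_div_add_one {t : ℝ} (ht : 0 < t) :
    (min (1 / 2) (t / (t + 1)))⁻¹ = max 2 (t⁻¹ + 1) := by
  have hinv : (t / (t + 1))⁻¹ = t⁻¹ + 1 := by field_simp; ring
  rcases le_total t 1 with h | h
  · rw [min_eq_right, hinv, max_eq_right]
    · linarith [one_le_inv_iff₀.mpr ⟨ht, h⟩]
    · rw [div_le_iff₀ (by linarith)]; linarith
  · rw [min_eq_left, max_eq_left]
    · norm_num
    · linarith [inv_le_one_of_one_le₀ h]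
    · rw [le_div_iff₀ (by linarith)]; linarith

/-- the Fine ℚ-codegree of a lattice pyramid. -/
theorem stmt_9 {d : ℕ} (hd : 1 ≤ d) (P : Set (Fin d → ℝ)) (hP : IsLatticePolytope P)
    (hfull : IsFullDim P) :
    fineCodeg (pyrSet P) = max 2 (fineCodeg P + 1) := by
  rw [fineCodeg, fineCodeg, hP.fineNumber_pyrSet hd hfull]
  exact inv_min_half_div_add_one (hP.fineNumber_pos hd hfull)
end
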